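/- arXiv:1805.12451 — 6 statements merged into one kernel-verified Lean document; each statement's English description precedes it below -/
import Mathlib

section
/- For probability mass functions P, Q with full support on a finite set X, D_∞^max(P,Q) = sup over nonempty subsets A ⊆ X of |log P(A) − log Q(A)|, where P(A) = Σ_{x∈A} P(x). -/
open Finset Real

/-- Rényi divergence of order infinity. -/
noncomputable def Dinf {α : Type*} [Fintype α] [Nonempty α] (P Q : α → ℝ) : ℝ :=
  Real.log (Finset.univ.sup' Finset.univ_nonempty (fun x => P x / Q x))

/-!
On a set `A`, `P(A) = ∑_{x ∈ A} (P x / Q x) Q x ≤ (max_x P x / Q x) Q(A)`, so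
`log P(A) - log Q(A) ≤ Dinf P Q`, and symmetrically `log Q(A) - log P(A) ≤ Dinf Q P`.
Both bounds are attained on singletons `{x}` at a maximiser `x` of the likelihood ratio.
-/

section

variable {α : Type*} [Fintype α] [Nonempty α] {P Q : α → ℝ}

lemma sum_le_sup'_div_mul_sum (hQ : ∀ x, 0 < Q x) (A : Finset α) :
    ∑ x ∈ A, P x ≤ univ.sup' univ_nonempty (fun x => P x / Q x) * ∑ x ∈ A, Q x := by
  rw [mul_sum]
  refine sum_le_sum fun x _ => ?_
  calc P x = P x / Q x * Q x := (div_mul_cancel₀ _ (hQ x).ne').symm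
    _ ≤ _ := mul_le_mul_of_nonneg_right (le_sup' (fun x => P x / Q x) (mem_univ x)) (hQ x).le

lemma log_sum_sub_log_sum_le_Dinf (hP : ∀ x, 0 < P x) (hQ : ∀ x, 0 < Q x) {A : Finset α}
    (hA : A.Nonempty) : log (∑ x ∈ A, P x) - log (∑ x ∈ A, Q x) ≤ Dinf P Q := by
  obtain ⟨x, hx⟩ := hA
  have hratio : 0 < univ.sup' univ_nonempty (fun x => P x / Q x) :=
    (div_pos (hP x) (hQ x)).trans_le (le_sup' (fun x => P x / Q x) (mem_univ x))
  have hQA : 0 < ∑ x ∈ A, Q x := sum_pos (fun x _ => hQ x) ⟨x, hx⟩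
  rw [sub_le_iff_le_add', Dinf, ← log_mul hQA.ne' hratio.ne', mul_comm]
  exact log_le_log (sum_pos (fun x _ => hP x) ⟨x, hx⟩) (sum_le_sup'_div_mul_sum hQ A)

lemma exists_log_sub_log_eq_Dinf (hP : ∀ x, 0 < P x) (hQ : ∀ x, 0 < Q x) :
    ∃ x, log (P x) - log (Q x) = Dinf P Q := by
  obtain ⟨x, -, hx⟩ := exists_mem_eq_sup' univ_nonempty (fun x => P x / Q x)
  exact ⟨x, by rw [Dinf, hx, log_div (hP x).ne' (hQ x).ne']⟩

end

theorem stmt5_general {α : Type*} [Fintype α] [Nonempty α] (P Q : α → ℝ)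
    (hP : ∀ x, 0 < P x) (hQ : ∀ x, 0 < Q x) :
    max (Dinf P Q) (Dinf Q P) =
      ⨆ A : {A : Finset α // A.Nonempty},
        |Real.log (∑ x ∈ A.1, P x) - Real.log (∑ x ∈ A.1, Q x)| := by
  have : Nonempty {A : Finset α // A.Nonempty} := ⟨⟨univ, univ_nonempty⟩⟩
  have bound : ∀ A : {A : Finset α // A.Nonempty},
      |log (∑ x ∈ A.1, P x) - log (∑ x ∈ A.1, Q x)| ≤ max (Dinf P Q) (Dinf Q P) :=
    fun ⟨_, hA⟩ => abs_sub_le_iff.2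
      ⟨le_max_of_le_left (log_sum_sub_log_sum_le_Dinf hP hQ hA),
        le_max_of_le_right (log_sum_sub_log_sum_le_Dinf hQ hP hA)⟩
  have attained (x : α) : |log (P x) - log (Q x)| ≤
      ⨆ A : {A : Finset α // A.Nonempty}, |log (∑ x ∈ A.1, P x) - log (∑ x ∈ A.1, Q x)| :=
    le_ciSup_of_le ⟨_, Set.forall_mem_range.2 bound⟩ ⟨{x}, singleton_nonempty x⟩ (by simp)
  refine le_antisymm (max_le ?_ ?_) (ciSup_le bound)
  · obtain ⟨x, hx⟩ := exists_log_sub_log_eq_Dinf hP hQ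
    exact hx ▸ (le_abs_self _).trans (attained x)
  · obtain ⟨x, hx⟩ := exists_log_sub_log_eq_Dinf hQ hP
    exact hx ▸ (le_abs_self _).trans ((abs_sub_comm _ _).trans_le (attained x))

/-- `D_∞^max(P,Q)` equals the supremum over nonempty subsets `A` of
`|log P(A) − log Q(A)|`, where `P(A) = ∑_{x ∈ A} P x`. -/
theorem stmt5 {α : Type*} [Fintype α] [Nonempty α] (P Q : α → ℝ)
    (hP : ∀ x, 0 < P x) (hQ : ∀ x, 0 < Q x)
    (hPsum : ∑ x, P x = 1) (hQsum : ∑ x, Q x = 1) :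
    max (Dinf P Q) (Dinf Q P) =
      ⨆ A : {A : Finset α // A.Nonempty},
        |Real.log (∑ x ∈ A.1, P x) - Real.log (∑ x ∈ A.1, Q x)| :=
  stmt5_general P Q hP hQ
end

section
/- For all x ≥ 0 and 1 ≤ s ≤ 2, (1+x)^s ≤ 1 + s·x + x^s. -/
/-!
On `[1, 2]` the exponent `s` interpolates between `1` and `2`, so weighted AM–GM gives
`(1 + u) ^ s ≤ 1 + s u + (s - 1) u ^ 2`, and by homogeneity
`(M + m) ^ s ≤ M ^ (s - 2) (M ^ 2 + s M m + (s - 1) m ^ 2)` for `M > 0`.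
Applied with `M = max 1 x` and `m = min 1 x`, the factor `M ^ (s - 2)` is at most `1` and the
quadratic remainder `(s - 1) m ^ 2` is at most `m ^ s`.
-/

open Real

namespace Real

variable {s : ℝ}

theorem rpow_le_two_sub_mul_add_sub_one_mul_sq {t : ℝ} (ht : 0 ≤ t) (hs1 : 1 ≤ s)
    (hs2 : s ≤ 2) :
    t ^ s ≤ (2 - s) * t + (s - 1) * t ^ 2 := by
  have hsplit : t ^ s = t ^ (2 - s) * (t ^ 2) ^ (s - 1) := by
    rw [← rpow_natCast t 2, ← rpow_mul ht, ← rpow_add' ht (by push_cast; linarith)]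
    push_cast; ring_nf
  rw [hsplit]
  exact geom_mean_le_arith_mean2_weighted (by linarith) (by linarith) ht (by positivity)
    (by ring)

theorem one_add_rpow_le {u : ℝ} (hu : 0 ≤ u) (hs1 : 1 ≤ s) (hs2 : s ≤ 2) :
    (1 + u) ^ s ≤ 1 + s * u + (s - 1) * u ^ 2 := by
  have := rpow_le_two_sub_mul_add_sub_one_mul_sq (by linarith : 0 ≤ 1 + u) hs1 hs2
  linarith

theorem add_rpow_le_rpow_sub_two_mul {M m : ℝ} (hM : 0 < M) (hm : 0 ≤ m) (hs1 : 1 ≤ s)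
    (hs2 : s ≤ 2) :
    (M + m) ^ s ≤ M ^ (s - 2) * (M ^ 2 + s * M * m + (s - 1) * m ^ 2) := by
  have hscale : M + m = M * (1 + m / M) := by field_simp
  have hMs : M ^ s = M ^ (s - 2) * M ^ 2 := by
    rw [← rpow_natCast, ← rpow_add hM]; norm_num
  calc (M + m) ^ s = M ^ s * (1 + m / M) ^ s := by
        rw [hscale, mul_rpow hM.le (by positivity)]
    _ ≤ M ^ s * (1 + s * (m / M) + (s - 1) * (m / M) ^ 2) :=
        mul_le_mul_of_nonneg_left (one_add_rpow_le (by positivity) hs1 hs2) (by positivity)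
    _ = M ^ (s - 2) * (M ^ 2 + s * M * m + (s - 1) * m ^ 2) := by
        rw [hMs]; field_simp

theorem add_rpow_le_of_le_one_le {M m : ℝ} (hM : 1 ≤ M) (hm0 : 0 ≤ m) (hm1 : m ≤ 1)
    (hs1 : 1 ≤ s) (hs2 : s ≤ 2) :
    (M + m) ^ s ≤ M ^ s + s * M * m + m ^ s := by
  have hM0 : 0 < M := by linarith
  have hMs : M ^ s = M ^ (s - 2) * M ^ 2 := by
    rw [← rpow_natCast, ← rpow_add hM0]; norm_num
  have hscale : M ^ (s - 2) ≤ 1 := rpow_le_one_of_one_le_of_nonpos hM (by linarith)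
  have hsq : m ^ 2 ≤ m ^ s := by
    rcases hm0.eq_or_lt with rfl | hm0
    · rw [zero_rpow (by linarith)]; simp
    · rw [← rpow_two]; exact rpow_le_rpow_of_exponent_ge hm0 hm1 hs2
  have hrest : 0 ≤ s * M * m + (s - 1) * m ^ 2 := by positivity
  calc (M + m) ^ s ≤ M ^ (s - 2) * (M ^ 2 + s * M * m + (s - 1) * m ^ 2) :=
        add_rpow_le_rpow_sub_two_mul hM0 hm0 hs1 hs2
    _ = M ^ s + M ^ (s - 2) * (s * M * m + (s - 1) * m ^ 2) := by rw [hMs]; ring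
    _ ≤ M ^ s + (s * M * m + (s - 1) * m ^ 2) := by
        gcongr; exact mul_le_of_le_one_left hrest hscale
    _ ≤ M ^ s + s * M * m + m ^ s := by nlinarith

end Real

/-- for `x ≥ 0` and `1 ≤ s ≤ 2`, `(1+x)^s ≤ 1 + s·x + x^s`. -/
theorem stmt8 (x s : ℝ) (hx : 0 ≤ x) (hs1 : 1 ≤ s) (hs2 : s ≤ 2) :
    (1 + x) ^ s ≤ 1 + s * x + x ^ s := by
  rcases le_total x 1 with hx1 | hx1
  · have := add_rpow_le_of_le_one_le le_rfl hx hx1 hs1 hs2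
    simpa only [one_rpow, mul_one] using this
  · have := add_rpow_le_of_le_one_le hx1 zero_le_one le_rfl hs1 hs2
    rw [one_rpow, mul_one, add_comm x] at this
    linarith
end

section
/- For all 0 ≤ x ≤ 1 and s ≥ 2, (1+x)^s ≤ 1 + s(2^{s-1} − 1)x + x^s. -/
/-!
Let `h p t = (1 + t) ^ p - t ^ p`, so `h p 0 = 1` and `h' p = p * h (p - 1)`. For `p ≥ 1` the
derivative is nonnegative on `[0, ∞)`, so `h p` is nondecreasing there. Hence for `s ≥ 2` the
derivative of `h s` on `[0, 1]` is at most `s * h (s - 1) 1 = s * (2 ^ (s - 1) - 1)`, and the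
mean value inequality finishes the proof.
-/

open Real Set

lemma hasDerivAt_one_add_rpow_sub_rpow {p : ℝ} (hp : 1 ≤ p) (t : ℝ) :
    HasDerivAt (fun t : ℝ => (1 + t) ^ p - t ^ p) (p * ((1 + t) ^ (p - 1) - t ^ (p - 1))) t := by
  have h₁ : HasDerivAt (fun t : ℝ => (1 + t) ^ p) (p * (1 + t) ^ (p - 1)) t := by
    simpa using ((hasDerivAt_id t).const_add 1).rpow_const (Or.inr hp)
  rw [mul_sub]
  exact h₁.sub (hasDerivAt_rpow_const (Or.inr hp))

lemma monotoneOn_one_add_rpow_sub_rpow {p : ℝ} (hp : 1 ≤ p) :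
    MonotoneOn (fun t : ℝ => (1 + t) ^ p - t ^ p) (Ici 0) := by
  have hderiv := hasDerivAt_one_add_rpow_sub_rpow hp
  refine monotoneOn_of_deriv_nonneg (convex_Ici 0)
    (fun t _ => (hderiv t).continuousAt.continuousWithinAt)
    (fun t _ => (hderiv t).differentiableAt.differentiableWithinAt) fun t ht => ?_
  rw [interior_Ici] at ht
  rw [(hderiv t).deriv]
  have : t ^ (p - 1) ≤ (1 + t) ^ (p - 1) :=
    rpow_le_rpow (le_of_lt ht) (by linarith [mem_Ioi.mp ht]) (by linarith)
  exact mul_nonneg (by linarith) (sub_nonneg.mpr this)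

lemma one_add_rpow_sub_rpow_le {p a x : ℝ} (hp : 2 ≤ p) (hx : 0 ≤ x) (hxa : x ≤ a) :
    (1 + x) ^ p - x ^ p ≤ 1 + p * ((1 + a) ^ (p - 1) - a ^ (p - 1)) * x := by
  have hderiv := hasDerivAt_one_add_rpow_sub_rpow (by linarith : 1 ≤ p)
  have hderiv_le : ∀ t ∈ interior (Icc 0 a),
      deriv (fun t : ℝ => (1 + t) ^ p - t ^ p) t ≤ p * ((1 + a) ^ (p - 1) - a ^ (p - 1)) := by
    intro t ht
    rw [interior_Icc] at ht
    rw [(hderiv t).deriv]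
    exact mul_le_mul_of_nonneg_left
      (monotoneOn_one_add_rpow_sub_rpow (by linarith) (le_of_lt ht.1) (ht.1.trans ht.2).le ht.2.le)
      (by linarith)
  have h := (convex_Icc 0 a).image_sub_le_mul_sub_of_deriv_le
    (fun t _ => (hderiv t).continuousAt.continuousWithinAt)
    (fun t _ => (hderiv t).differentiableAt.differentiableWithinAt) hderiv_le
    0 ⟨le_rfl, hx.trans hxa⟩ x ⟨hx, hxa⟩ hx
  simp only [add_zero, one_rpow, zero_rpow (by linarith : p ≠ 0), sub_zero] at h
  linarith

/-- for `0 ≤ x ≤ 1` and `s ≥ 2`, `(1+x)^s ≤ 1 + s(2^{s-1} − 1)x + x^s`. -/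
theorem stmt9 (x s : ℝ) (hx0 : 0 ≤ x) (hx1 : x ≤ 1) (hs : 2 ≤ s) :
    (1 + x) ^ s ≤ 1 + s * ((2 : ℝ) ^ (s - 1) - 1) * x + x ^ s := by
  have h := one_add_rpow_sub_rpow_le hs hx0 hx1
  norm_num at h
  linarith
end

section
/- Let P be a probability mass function with full support on a finite set X. For any a > 0 and any real b, the supremum over all probability mass functions P̃ on X of a·H(P̃) + b·Σ_x P̃(x) log P(x) equals (a − b)·H_{b/a}(P), where H_γ denotes the Rényi entropy of order γ and H is the Shannon entropy. -/
open Finset Real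

/-- Rényi entropy of order `γ` (Shannon entropy at `γ = 1`, by continuity). -/
noncomputable def renyiH {α : Type*} [Fintype α] (P : α → ℝ) (γ : ℝ) : ℝ :=
  if γ = 1 then -∑ x, P x * Real.log (P x)
  else (1 / (1 - γ)) * Real.log (∑ x, P x ^ γ)

/-- Shannon entropy. -/
noncomputable def shannonH {α : Type*} [Fintype α] (P : α → ℝ) : ℝ :=
  -∑ x, P x * Real.log (P x)

/-
Gibbs variational principle: for weights `w > 0` and any pmf `q`,
`∑ q (log w - log q) ≤ log ∑ w`, with equality at `q = w / ∑ w`; termwise this is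
`log t ≤ t - 1`. With `w = exp (c / a)` the maximum of `a·H(q) + ∑ q c` is
`a · log ∑ exp (c / a)`, and for `c = b log P` this is
`a · log ∑ P^(b/a) = (a - b)·H_{b/a}(P)`.
-/

theorem mul_log_sub_log_le_sub {p q : ℝ} (hp : 0 < p) (hq : 0 ≤ q) :
    q * (log p - log q) ≤ p - q := by
  rcases hq.eq_or_lt with rfl | hq
  · simpa using hp.le
  calc q * (log p - log q) = q * log (p / q) := by rw [log_div hp.ne' hq.ne']
    _ ≤ q * (p / q - 1) := by gcongr; exact log_le_sub_one_of_pos (div_pos hp hq)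
    _ = p - q := by field_simp

section Gibbs

variable {α : Type*} [Fintype α]

theorem sum_mul_log_sub_log_le_log_sum {w q : α → ℝ} (hw : ∀ x, 0 < w x)
    (hq : ∀ x, 0 ≤ q x) (hq1 : ∑ x, q x = 1) :
    ∑ x, q x * (log (w x) - log (q x)) ≤ log (∑ x, w x) := by
  have hne : (univ : Finset α).Nonempty := nonempty_of_sum_ne_zero (f := q) (by simp [hq1])
  set S := ∑ x, w x
  have hS : 0 < S := sum_pos (fun x _ => hw x) hne
  have hterm : ∀ x, q x * (log (w x / S) - log (q x)) ≤ w x / S - q x :=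
    fun x => mul_log_sub_log_le_sub (div_pos (hw x) hS) (hq x)
  have hsum : ∑ x, q x * (log (w x / S) - log (q x)) ≤ 0 := by
    calc _ ≤ ∑ x, (w x / S - q x) := sum_le_sum fun x _ => hterm x
      _ = 0 := by rw [sum_sub_distrib, ← sum_div, div_self hS.ne', hq1, sub_self]
  have hsplit : ∑ x, q x * (log (w x / S) - log (q x))
      = ∑ x, q x * (log (w x) - log (q x)) - log S := by
    simp only [log_div (hw _).ne' hS.ne', mul_sub, sum_sub_distrib, ← sum_mul, hq1, one_mul]
    ring
  linarith

theorem sum_mul_log_sub_log_normalize_eq_log_sum [Nonempty α] {w : α → ℝ}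
    (hw : ∀ x, 0 < w x) :
    ∑ x, w x / (∑ y, w y) * (log (w x) - log (w x / ∑ y, w y)) = log (∑ x, w x) := by
  have hS : 0 < ∑ y, w y := sum_pos (fun x _ => hw x) univ_nonempty
  simp only [log_div (hw _).ne' hS.ne', sub_sub_cancel, ← sum_mul, ← sum_div,
    div_self hS.ne', one_mul]

theorem isGreatest_mul_shannonH_add_sum_mul [Nonempty α] {a : ℝ} (ha : 0 < a) (c : α → ℝ) :
    IsGreatest {y : ℝ | ∃ q : α → ℝ, (∀ x, 0 ≤ q x) ∧ (∑ x, q x = 1) ∧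
        y = a * shannonH q + ∑ x, q x * c x}
      (a * log (∑ x, exp (c x / a))) := by
  set w := fun x => exp (c x / a)
  have hw : ∀ x, 0 < w x := fun x => exp_pos _
  have hobj : ∀ q : α → ℝ,
      a * shannonH q + ∑ x, q x * c x = a * ∑ x, q x * (log (w x) - log (q x)) := by
    intro q
    simp only [shannonH, w, log_exp, mul_sub, sum_sub_distrib, mul_div_assoc', ← sum_div]
    field_simp
    ring
  have hS : 0 < ∑ x, w x := sum_pos (fun x _ => hw x) univ_nonempty
  refine ⟨⟨fun x => w x / ∑ y, w y, fun x => (div_pos (hw x) hS).le, ?_, ?_⟩, ?_⟩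
  · rw [← sum_div, div_self hS.ne']
  · rw [hobj, sum_mul_log_sub_log_normalize_eq_log_sum hw]
  · rintro _ ⟨q, hq, hq1, rfl⟩
    rw [hobj]
    exact mul_le_mul_of_nonneg_left (sum_mul_log_sub_log_le_log_sum hw hq hq1) ha.le

end Gibbs

theorem sub_mul_renyiH_div {α : Type*} [Fintype α] {P : α → ℝ} (hPsum : ∑ x, P x = 1)
    {a : ℝ} (ha : a ≠ 0) (b : ℝ) :
    (a - b) * renyiH P (b / a) = a * log (∑ x, P x ^ (b / a)) := by
  unfold renyiH
  split_ifs with h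
  · obtain rfl : b = a := (div_eq_one_iff_eq ha).mp h
    simp [div_self ha, hPsum]
  · have hab : a - b ≠ 0 := fun h' => h ((div_eq_one_iff_eq ha).mpr (sub_eq_zero.mp h').symm)
    field_simp

theorem stmt12_general {α : Type*} [Fintype α] (P : α → ℝ)
    (hP : ∀ x, 0 < P x) (hPsum : ∑ x, P x = 1) (a b : ℝ) (ha : 0 < a) :
    sSup {y : ℝ | ∃ Pt : α → ℝ, (∀ x, 0 ≤ Pt x) ∧ (∑ x, Pt x = 1) ∧
        y = a * shannonH Pt + b * ∑ x, Pt x * Real.log (P x)} =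
      (a - b) * renyiH P (b / a) := by
  have : Nonempty α := (nonempty_of_sum_ne_zero (s := univ) (f := P) (by simp [hPsum])).to_type
  have hcross : ∀ Pt : α → ℝ, b * ∑ x, Pt x * log (P x) = ∑ x, Pt x * (b * log (P x)) :=
    fun Pt => by rw [mul_sum]; ring_nf
  simp only [hcross]
  rw [(isGreatest_mul_shannonH_add_sum_mul ha fun x => b * log (P x)).csSup_eq,
    sub_mul_renyiH_div hPsum ha.ne']
  refine congrArg (a * log ·) (sum_congr rfl fun x _ => ?_)
  rw [rpow_def_of_pos (hP x)]
  ring_nf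

/-- for a full-support pmf `P`, `a > 0` and `b ∈ ℝ`, the supremum over
pmfs `P̃` of `a·H(P̃) + b·∑ P̃(x) log P(x)` equals `(a − b)·H_{b/a}(P)`. -/
theorem stmt12 {α : Type*} [Fintype α] [Nonempty α] (P : α → ℝ)
    (hP : ∀ x, 0 < P x) (hPsum : ∑ x, P x = 1) (a b : ℝ) (ha : 0 < a) :
    sSup {y : ℝ | ∃ Pt : α → ℝ, (∀ x, 0 ≤ Pt x) ∧ (∑ x, Pt x = 1) ∧
        y = a * shannonH Pt + b * ∑ x, Pt x * Real.log (P x)} =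
      (a - b) * renyiH P (b / a) :=
  stmt12_general P hP hPsum a b ha
end

section
/- Let P be a probability mass function with full support on a finite set X. For any a < 0 and any real b, the infimum over all probability mass functions P̃ on X of a·H(P̃) + b·Σ_x P̃(x) log P(x) equals (a − b)·H_{b/a}(P). -/
open Finset Real

lemma mul_log_le_mul_log_add_sub {p q : ℝ} (hp : 0 ≤ p) (hq : 0 < q) :
    p * log q ≤ p * log p + (q - p) := by
  rcases hp.eq_or_lt with rfl | hp
  · simpa using hq.le
  have hlog : log q - log p ≤ q / p - 1 := by
    rw [← log_div hq.ne' hp.ne']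
    exact log_le_sub_one_of_pos (div_pos hq hp)
  have hmul : p * (q / p - 1) = q - p := by field_simp
  nlinarith [mul_le_mul_of_nonneg_left hlog hp.le]

lemma sum_mul_log_le_sum_mul_log {α : Type*} [Fintype α] {p q : α → ℝ}
    (hp : ∀ x, 0 ≤ p x) (hq : ∀ x, 0 < q x) (hsum : ∑ x, q x = ∑ x, p x) :
    ∑ x, p x * log (q x) ≤ ∑ x, p x * log (p x) := by
  have h := sum_le_sum fun x (_ : x ∈ univ) => mul_log_le_mul_log_add_sub (hp x) (hq x)
  rw [sum_add_distrib, sum_sub_distrib, hsum, sub_self, add_zero] at h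
  exact h

lemma one_sub_mul_renyiH {α : Type*} [Fintype α] {P : α → ℝ} (hPsum : ∑ x, P x = 1)
    (γ : ℝ) : (1 - γ) * renyiH P γ = log (∑ x, P x ^ γ) := by
  rw [renyiH]
  split_ifs with hγ
  · simp [hγ, hPsum]
  · rw [← mul_assoc, mul_one_div_cancel (sub_ne_zero.mpr (Ne.symm hγ)), one_mul]

noncomputable def escort {α : Type*} [Fintype α] (P : α → ℝ) (γ : ℝ) (x : α) : ℝ :=
  P x ^ γ / ∑ y, P y ^ γ

section Escort

variable {α : Type*} [Fintype α] [Nonempty α] {P : α → ℝ}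

lemma sum_rpow_pos (hP : ∀ x, 0 < P x) (γ : ℝ) : 0 < ∑ x, P x ^ γ :=
  sum_pos (fun x _ => rpow_pos_of_pos (hP x) γ) univ_nonempty

lemma escort_pos (hP : ∀ x, 0 < P x) (γ : ℝ) (x : α) : 0 < escort P γ x :=
  div_pos (rpow_pos_of_pos (hP x) γ) (sum_rpow_pos hP γ)

lemma sum_escort (hP : ∀ x, 0 < P x) (γ : ℝ) : ∑ x, escort P γ x = 1 := by
  simp only [escort, ← sum_div]
  exact div_self (sum_rpow_pos hP γ).ne'

lemma sum_mul_log_escort (hP : ∀ x, 0 < P x) (γ : ℝ) {p : α → ℝ} (hp : ∑ x, p x = 1) :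
    ∑ x, p x * log (escort P γ x) = γ * ∑ x, p x * log (P x) - log (∑ x, P x ^ γ) := by
  have hlog (x : α) : log (escort P γ x) = γ * log (P x) - log (∑ y, P y ^ γ) := by
    rw [escort, log_div (rpow_pos_of_pos (hP x) γ).ne' (sum_rpow_pos hP γ).ne',
      log_rpow (hP x)]
  simp only [hlog, mul_sub, sum_sub_distrib, ← sum_mul, hp, one_mul, mul_sum]
  congr 1
  exact sum_congr rfl fun x _ => by ring

lemma objective_eq_log_add_divergence (hP : ∀ x, 0 < P x) {a : ℝ} (ha : a ≠ 0) (b : ℝ)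
    {p : α → ℝ} (hp : ∑ x, p x = 1) :
    a * shannonH p + b * ∑ x, p x * log (P x) =
      a * log (∑ x, P x ^ (b / a)) +
        -a * (∑ x, p x * log (p x) - ∑ x, p x * log (escort P (b / a) x)) := by
  rw [shannonH, sum_mul_log_escort hP (b / a) hp]
  field_simp
  ring

end Escort

/-- for a full-support pmf `P`, `a < 0` and `b ∈ ℝ`, the infimum over
pmfs `P̃` of `a·H(P̃) + b·∑ P̃(x) log P(x)` equals `(a − b)·H_{b/a}(P)`. -/
theorem stmt13 {α : Type*} [Fintype α] [Nonempty α] (P : α → ℝ)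
    (hP : ∀ x, 0 < P x) (hPsum : ∑ x, P x = 1) (a b : ℝ) (ha : a < 0) :
    sInf {y : ℝ | ∃ Pt : α → ℝ, (∀ x, 0 ≤ Pt x) ∧ (∑ x, Pt x = 1) ∧
        y = a * shannonH Pt + b * ∑ x, Pt x * Real.log (P x)} =
      (a - b) * renyiH P (b / a) := by
  have hRHS : (a - b) * renyiH P (b / a) = a * log (∑ x, P x ^ (b / a)) := by
    rw [← one_sub_mul_renyiH hPsum, ← mul_assoc, mul_one_sub, mul_div_cancel₀ b ha.ne]
  rw [hRHS]
  refine IsLeast.csInf_eq ⟨⟨escort P (b / a), fun x => (escort_pos hP _ x).le,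
    sum_escort hP _, ?_⟩, ?_⟩
  · rw [objective_eq_log_add_divergence hP ha.ne b (sum_escort hP _), sub_self, mul_zero,
      add_zero]
  · rintro y ⟨p, hp, hpsum, rfl⟩
    rw [objective_eq_log_add_divergence hP ha.ne b hpsum]
    have hgibbs := sum_mul_log_le_sum_mul_log hp (escort_pos hP (b / a))
      (by rw [sum_escort hP, hpsum])
    exact le_add_of_nonneg_right (mul_nonneg (neg_nonneg.mpr ha.le) (sub_nonneg.mpr hgibbs))
end

section
/- For a probability mass function P with full support on a finite set X and jump level ω with 0 ≤ ω < H_∞(P), the optimization min over probability mass functions P̃ with D(P̃‖P) ≤ ω of −Σ_x P̃(x) log P(x) equals max over t ∈ (0,∞) of { H_{1+t}(P) − ω/t }, where H_∞(P) := −log max_x P(x). -/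
/-!
Gibbs' inequality `D(P̃‖Q_t) ≥ 0` against the tilted distribution `Q_t ∝ P^{1+t}` expands to
`H_{1+t}(P) - D(P̃‖P) / t ≤ -∑ P̃ log P`, which is weak duality; for `P̃ = Q_t` it is an equality.
The map `t ↦ D(Q_t‖P)` is continuous and vanishes at `0`, so if it reaches `ω` at some `t > 0`,
the primal and dual values meet there. Otherwise either `ω = 0`, where `P` is feasible and
`H_{1+t}(P)` tends to its Shannon entropy as `t → 0⁺`, or `D(Q_t‖P) < ω` for all `t > 0`, and the
duality gap, at most `ω / t`, closes as `t → ∞`.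
-/

open Finset Real Filter Topology InformationTheory

noncomputable section

variable {α : Type*} [Fintype α]

def relEntropy (f q : α → ℝ) : ℝ := ∑ x, f x * log (f x / q x)

def crossEntropy (f q : α → ℝ) : ℝ := -∑ x, f x * log (q x)

/-- The Rényi entropy of order `1 + t`. -/
def renyiEntropy (P : α → ℝ) (t : ℝ) : ℝ := -1 / t * log (∑ x, P x ^ (1 + t))

def tilt (P : α → ℝ) (t : ℝ) (x : α) : ℝ := P x ^ (1 + t) / ∑ y, P y ^ (1 + t)

lemma relEntropy_eq_sum_mul_klFun {f q : α → ℝ} (hq : ∀ x, 0 < q x)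
    (hsum : ∑ x, f x = ∑ x, q x) : relEntropy f q = ∑ x, q x * klFun (f x / q x) := by
  have h : ∀ x, q x * klFun (f x / q x) = f x * log (f x / q x) + (q x - f x) := by
    intro x
    have := (hq x).ne'
    rw [klFun_apply]
    field_simp
    ring
  simp only [h, sum_add_distrib, sum_sub_distrib, hsum, sub_self, add_zero, relEntropy]

lemma relEntropy_nonneg {f q : α → ℝ} (hf : ∀ x, 0 ≤ f x) (hq : ∀ x, 0 < q x)
    (hsum : ∑ x, f x = ∑ x, q x) : 0 ≤ relEntropy f q := by
  rw [relEntropy_eq_sum_mul_klFun hq hsum]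
  exact sum_nonneg fun x _ => mul_nonneg (hq x).le (klFun_nonneg (div_nonneg (hf x) (hq x).le))

@[simp]
lemma relEntropy_self (f : α → ℝ) : relEntropy f f = 0 := by
  simp [relEntropy]

lemma tilt_zero {P : α → ℝ} (hPsum : ∑ x, P x = 1) : tilt P 0 = P := by
  ext x
  simp [tilt, hPsum]

section Tilt

variable {P : α → ℝ} (hP : ∀ x, 0 < P x)
include hP

lemma sum_rpow_pos_s17 [Nonempty α] (t : ℝ) : 0 < ∑ x, P x ^ (1 + t) :=
  sum_pos (fun x _ => rpow_pos_of_pos (hP x) _) univ_nonempty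

lemma tilt_pos [Nonempty α] (t : ℝ) (x : α) : 0 < tilt P t x :=
  div_pos (rpow_pos_of_pos (hP x) _) (sum_rpow_pos_s17 hP t)

lemma sum_tilt [Nonempty α] (t : ℝ) : ∑ x, tilt P t x = 1 := by
  simp only [tilt, ← sum_div]
  exact div_self (sum_rpow_pos_s17 hP t).ne'

lemma log_tilt [Nonempty α] (t : ℝ) (x : α) :
    log (tilt P t x) = (1 + t) * log (P x) - log (∑ y, P y ^ (1 + t)) := by
  rw [tilt, log_div (rpow_pos_of_pos (hP x) _).ne' (sum_rpow_pos_s17 hP t).ne', log_rpow (hP x)]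

lemma relEntropy_tilt [Nonempty α] {f : α → ℝ} (hf : ∑ x, f x = 1) (t : ℝ) :
    relEntropy f (tilt P t) =
      relEntropy f P + t * crossEntropy f P + log (∑ x, P x ^ (1 + t)) := by
  have h : ∀ x, f x * log (f x / tilt P t x) =
      f x * log (f x / P x) - t * (f x * log (P x)) + f x * log (∑ y, P y ^ (1 + t)) := by
    intro x
    rcases eq_or_ne (f x) 0 with h0 | h0
    · simp [h0]
    · rw [log_div h0 (tilt_pos hP t x).ne', log_div h0 (hP x).ne', log_tilt hP]
      ring
  simp only [relEntropy, crossEntropy, h, sum_add_distrib, sum_sub_distrib, ← mul_sum,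
    ← sum_mul, hf, one_mul]
  ring

lemma crossEntropy_tilt [Nonempty α] {t : ℝ} (ht : t ≠ 0) :
    crossEntropy (tilt P t) P = renyiEntropy P t - relEntropy (tilt P t) P / t := by
  have h := relEntropy_tilt hP (sum_tilt hP t) t
  rw [relEntropy_self] at h
  rw [renyiEntropy]
  field_simp
  linarith

lemma renyiEntropy_sub_div_le_crossEntropy [Nonempty α] {f : α → ℝ} (hf : ∀ x, 0 ≤ f x)
    (hfsum : ∑ x, f x = 1) {ω t : ℝ} (hD : relEntropy f P ≤ ω) (ht : 0 < t) :
    renyiEntropy P t - ω / t ≤ crossEntropy f P := by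
  have h := relEntropy_nonneg hf (tilt_pos hP t) (by rw [hfsum, sum_tilt hP t])
  rw [relEntropy_tilt hP hfsum t] at h
  rw [renyiEntropy, div_mul_eq_mul_div, ← sub_div, div_le_iff₀ ht]
  linarith

lemma continuous_tilt [Nonempty α] (x : α) : Continuous fun t => tilt P t x := by
  unfold tilt
  have hc : ∀ y, Continuous fun t : ℝ => P y ^ (1 + t) := fun y =>
    (continuous_const_rpow (hP y).ne').comp (continuous_const.add continuous_id)
  exact (hc x).div (continuous_finsetSum _ fun y _ => hc y) fun t => (sum_rpow_pos_s17 hP t).ne'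

lemma continuous_relEntropy_tilt [Nonempty α] :
    Continuous fun t => relEntropy (tilt P t) P :=
  continuous_finsetSum _ fun x _ => (continuous_tilt hP x).mul <|
    ((continuous_tilt hP x).div_const _).log fun t => (div_pos (tilt_pos hP t x) (hP x)).ne'

lemma tendsto_renyiEntropy_nhdsGT_zero (hPsum : ∑ x, P x = 1) :
    Tendsto (renyiEntropy P) (𝓝[>] 0) (𝓝 (crossEntropy P P)) := by
  have hZ0 : ∑ x, P x ^ (1 + (0 : ℝ)) = 1 := by simpa using hPsum
  have hZ : HasDerivAt (fun t : ℝ => ∑ x, P x ^ (1 + t)) (∑ x, P x * log (P x)) 0 := by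
    refine HasDerivAt.fun_sum fun x _ => ?_
    simpa [mul_comm] using ((hasDerivAt_id' (0 : ℝ)).const_add 1).const_rpow (hP x)
  have hlog := (hZ.log (by rw [hZ0]; exact one_ne_zero)).tendsto_slope_zero_right.neg
  rw [hZ0, div_one] at hlog
  refine hlog.congr fun t => ?_
  simp only [renyiEntropy, zero_add, log_one, sub_zero, smul_eq_mul]
  ring

end Tilt

def klBallCrossEntropies (P : α → ℝ) (ω : ℝ) : Set ℝ :=
  {y | ∃ Pt : α → ℝ, (∀ x, 0 ≤ Pt x) ∧ ∑ x, Pt x = 1 ∧ relEntropy Pt P ≤ ω ∧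
    y = crossEntropy Pt P}

def renyiDualValues (P : α → ℝ) (ω : ℝ) : Set ℝ :=
  {y | ∃ t, 0 < t ∧ y = renyiEntropy P t - ω / t}

section Duality

variable [Nonempty α] {P : α → ℝ} (hP : ∀ x, 0 < P x) (hPsum : ∑ x, P x = 1)
  {ω : ℝ} (hω : 0 ≤ ω)
include hP hPsum hω

omit [Nonempty α] in
lemma crossEntropy_self_mem_klBallCrossEntropies : crossEntropy P P ∈ klBallCrossEntropies P ω :=
  ⟨P, fun x => (hP x).le, hPsum, by rwa [relEntropy_self], rfl⟩

omit hPsum hω in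
lemma bddBelow_klBallCrossEntropies : BddBelow (klBallCrossEntropies P ω) :=
  ⟨renyiEntropy P 1 - ω / 1, by
    rintro _ ⟨f, hf, hfsum, hD, rfl⟩
    exact renyiEntropy_sub_div_le_crossEntropy hP hf hfsum hD one_pos⟩

lemma bddAbove_renyiDualValues : BddAbove (renyiDualValues P ω) :=
  ⟨crossEntropy P P, by
    rintro _ ⟨t, ht, rfl⟩
    exact renyiEntropy_sub_div_le_crossEntropy hP (fun x => (hP x).le) hPsum
      (by rwa [relEntropy_self]) ht⟩

lemma sSup_renyiDualValues_le_sInf :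
    sSup (renyiDualValues P ω) ≤ sInf (klBallCrossEntropies P ω) := by
  refine le_csInf ⟨_, crossEntropy_self_mem_klBallCrossEntropies hP hPsum hω⟩ ?_
  rintro _ ⟨f, hf, hfsum, hD, rfl⟩
  refine csSup_le ⟨_, 1, one_pos, rfl⟩ ?_
  rintro _ ⟨t, ht, rfl⟩
  exact renyiEntropy_sub_div_le_crossEntropy hP hf hfsum hD ht

lemma sInf_le_sSup_add_of_relEntropy_tilt_le {t : ℝ} (ht : 0 < t)
    (hD : relEntropy (tilt P t) P ≤ ω) :
    sInf (klBallCrossEntropies P ω) ≤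
      sSup (renyiDualValues P ω) + (ω - relEntropy (tilt P t) P) / t := calc
  _ ≤ crossEntropy (tilt P t) P :=
    csInf_le (bddBelow_klBallCrossEntropies hP)
      ⟨_, fun x => (tilt_pos hP t x).le, sum_tilt hP t, hD, rfl⟩
  _ = (renyiEntropy P t - ω / t) + (ω - relEntropy (tilt P t) P) / t := by
    rw [crossEntropy_tilt hP ht.ne']
    ring
  _ ≤ _ := by
    gcongr
    exact le_csSup (bddAbove_renyiDualValues hP hPsum hω) ⟨t, ht, rfl⟩

omit hω in
lemma crossEntropy_self_le_sSup_renyiDualValues_zero :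
    crossEntropy P P ≤ sSup (renyiDualValues P 0) := by
  refine le_of_tendsto (tendsto_renyiEntropy_nhdsGT_zero hP hPsum) ?_
  filter_upwards [self_mem_nhdsWithin] with t ht
  simpa using le_csSup (bddAbove_renyiDualValues hP hPsum le_rfl) ⟨t, ht, rfl⟩

lemma sInf_klBallCrossEntropies_le_sSup :
    sInf (klBallCrossEntropies P ω) ≤ sSup (renyiDualValues P ω) := by
  rcases hω.eq_or_lt with rfl | hωpos
  · exact (csInf_le (bddBelow_klBallCrossEntropies hP)
      (crossEntropy_self_mem_klBallCrossEntropies hP hPsum le_rfl)).trans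
      (crossEntropy_self_le_sSup_renyiDualValues_zero hP hPsum)
  by_cases hreach : ∃ t, 0 < t ∧ ω ≤ relEntropy (tilt P t) P
  · obtain ⟨t₁, ht₁, hωt₁⟩ := hreach
    have hω_mem : ω ∈ Set.Icc (relEntropy (tilt P 0) P) (relEntropy (tilt P t₁) P) := by
      rw [tilt_zero hPsum, relEntropy_self]
      exact ⟨hω, hωt₁⟩
    obtain ⟨t₀, ⟨ht₀, -⟩, hD⟩ :=
      intermediate_value_Icc ht₁.le (continuous_relEntropy_tilt hP).continuousOn hω_mem
    have ht₀pos : 0 < t₀ := by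
      refine ht₀.lt_of_ne ?_
      rintro rfl
      simp only [tilt_zero hPsum, relEntropy_self] at hD
      exact hωpos.ne hD
    simpa [hD] using sInf_le_sSup_add_of_relEntropy_tilt_le hP hPsum hω ht₀pos hD.le
  push Not at hreach
  refine le_of_forall_pos_le_add fun ε hε => ?_
  have ht : 0 < ω / ε := div_pos hωpos hε
  have hD := hreach _ ht
  calc
    _ ≤ _ := sInf_le_sSup_add_of_relEntropy_tilt_le hP hPsum hω ht hD.le
    _ ≤ sSup (renyiDualValues P ω) + ω / (ω / ε) := by
      have := relEntropy_nonneg (fun x => (tilt_pos hP (ω / ε) x).le) hP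
        (by rw [sum_tilt hP, hPsum])
      gcongr
      linarith
    _ = _ := by field_simp

end Duality

end

theorem stmt17_general {α : Type*} [Fintype α] [Nonempty α] (P : α → ℝ)
    (hP : ∀ x, 0 < P x) (hPsum : ∑ x, P x = 1)
    (ω : ℝ) (hω0 : 0 ≤ ω) :
    sInf {y : ℝ | ∃ Pt : α → ℝ, (∀ x, 0 ≤ Pt x) ∧ (∑ x, Pt x = 1) ∧
        (∑ x, Pt x * Real.log (Pt x / P x)) ≤ ω ∧
        y = -∑ x, Pt x * Real.log (P x)} =
      sSup {y : ℝ | ∃ t : ℝ, 0 < t ∧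
        y = (-1 / t) * Real.log (∑ x, P x ^ (1 + t)) - ω / t} :=
  le_antisymm (sInf_klBallCrossEntropies_le_sSup hP hPsum hω0)
    (sSup_renyiDualValues_le_sInf hP hPsum hω0)

/-- for a full-support pmf `P` and `0 ≤ ω < H_∞(P) = −log max_x P(x)`,
`min { −∑ P̃(x) log P(x) : D(P̃‖P) ≤ ω } = sup_{t > 0} { H_{1+t}(P) − ω/t }`,
where `H_{1+t}(P) = (−1/t) log ∑ P(x)^{1+t}`. -/
theorem stmt17 {α : Type*} [Fintype α] [Nonempty α] (P : α → ℝ)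
    (hP : ∀ x, 0 < P x) (hPsum : ∑ x, P x = 1)
    (ω : ℝ) (hω0 : 0 ≤ ω)
    (hω : ω < -Real.log (Finset.univ.sup' Finset.univ_nonempty P)) :
    sInf {y : ℝ | ∃ Pt : α → ℝ, (∀ x, 0 ≤ Pt x) ∧ (∑ x, Pt x = 1) ∧
        (∑ x, Pt x * Real.log (Pt x / P x)) ≤ ω ∧
        y = -∑ x, Pt x * Real.log (P x)} =
      sSup {y : ℝ | ∃ t : ℝ, 0 < t ∧
        y = (-1 / t) * Real.log (∑ x, P x ^ (1 + t)) - ω / t} :=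
  stmt17_general P hP hPsum ω hω0
end
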